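/- arXiv:2408.06271 — 11 statements merged into one kernel-verified Lean document; each statement's English description precedes it below -/
import Mathlib

section
/- For any closed global negative formula N and any strict finitistic model W, if N is forced at some node of W then N is forced at every node of W (assertibility of a GN formula implies its validity). -/
/-- Formulas of the (domain-extended) language of strict finitistic first-order
logic: atoms `atom P ds` (predicate symbol `P` applied to domain elements),
the existence predicate `E`, the connectives, global negation `neg`, and the
two modes (global / local) of universal and existential quantification. -/
inductive Fm (D : Type) : Type
  | top
  | bot
  | atom (P : ℕ) (ds : List D)
  | E (d : D)
  | conj (A B : Fm D)
  | disj (A B : Fm D)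
  | impl (A B : Fm D)
  | neg (A : Fm D)
  | allG (A : D → Fm D)
  | allL (A : D → Fm D)
  | exG (A : D → Fm D)
  | exL (A : D → Fm D)

/-- Weak negation `⌐A := A → ⊥`. -/
def Fm.wneg {D : Type} (A : Fm D) : Fm D := Fm.impl A Fm.bot

/-- A strict finitistic model: a rooted partially ordered Kripke frame with a
constant domain `D` and a monotone valuation of atoms (including the
existence predicate `E`). -/
structure SFModel (D : Type) : Type 1 where
  K : Type
  le : K → K → Prop
  refl : ∀ k, le k k
  trans : ∀ {a b c}, le a b → le b c → le a c
  antisymm : ∀ {a b}, le a b → le b a → a = b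
  root : K
  root_le : ∀ k, le root k
  atomVal : ℕ → List D → K → Prop
  EVal : D → K → Prop
  atom_mono : ∀ {P ds k k'}, le k k' → atomVal P ds k → atomVal P ds k'
  E_mono : ∀ {d k k'}, le k k' → EVal d k → EVal d k'

/-- The strict finitistic forcing relation `k ⊨ A`. -/
def SFModel.force {D : Type} (W : SFModel D) : W.K → Fm D → Prop
  | _, Fm.top => True
  | _, Fm.bot => False
  | k, Fm.atom P ds => W.atomVal P ds k
  | k, Fm.E d => W.EVal d k
  | k, Fm.conj A B => W.force k A ∧ W.force k B
  | k, Fm.disj A B => W.force k A ∨ W.force k B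
  | k, Fm.impl A B => ∀ k', W.le k k' → W.force k' A → ∃ k'', W.le k' k'' ∧ W.force k'' B
  | _, Fm.neg A => ∀ l, ¬ W.force l A
  | k, Fm.allG A => ∀ (d : D) (k' : W.K), W.le k k' → ∃ k'', W.le k' k'' ∧ W.force k'' (A d)
  | k, Fm.allL A => ∀ (d : D) (k' : W.K), W.le k k' → W.EVal d k' →
      ∃ k'', W.le k' k'' ∧ W.force k'' (A d)
  | k, Fm.exG A => ∃ d : D, W.force k (A d)
  | k, Fm.exL A => ∃ d : D, W.EVal d k ∧ W.force k (A d)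

/-- `A` is valid in `W`: forced at every node. -/
def SFModel.valid {D : Type} (W : SFModel D) (A : Fm D) : Prop := ∀ k, W.force k A

/-- `A` is assertible in `W`: forced at some node. -/
def SFModel.assertible {D : Type} (W : SFModel D) (A : Fm D) : Prop := ∃ k, W.force k A

/-- `A` is prevalent in `W`: above every node it is eventually forced. -/
def SFModel.prevalent {D : Type} (W : SFModel D) (A : Fm D) : Prop :=
  ∀ k, ∃ k', W.le k k' ∧ W.force k' A

/-- Atomic prevalence property: every assertible closed atom (including `E`)
is prevalent. -/
def SFModel.atomicPrev {D : Type} (W : SFModel D) : Prop :=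
  (∀ (P : ℕ) (ds : List D), W.assertible (Fm.atom P ds) → W.prevalent (Fm.atom P ds)) ∧
  (∀ d : D, W.assertible (Fm.E d) → W.prevalent (Fm.E d))

/-- Formula prevalence property: every assertible closed formula is prevalent. -/
def SFModel.formulaPrev {D : Type} (W : SFModel D) : Prop :=
  ∀ A : Fm D, W.assertible A → W.prevalent A

/-- Object prevalence property: `E(d)` is prevalent for every domain element. -/
def SFModel.objectPrev {D : Type} (W : SFModel D) : Prop :=
  ∀ d : D, W.prevalent (Fm.E d)

/-- A prevalent model: both the formula and object prevalence properties. -/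
def SFModel.prevModel {D : Type} (W : SFModel D) : Prop :=
  W.formulaPrev ∧ W.objectPrev

/-- The class of global negative (GN) formulas. -/
inductive GN {D : Type} : Fm D → Prop
  | bot : GN Fm.bot
  | neg (A : Fm D) : GN (Fm.neg A)
  | conj {N N' : Fm D} : GN N → GN N' → GN (Fm.conj N N')
  | disj {N N' : Fm D} : GN N → GN N' → GN (Fm.disj N N')
  | impl {N N' : Fm D} : GN N → GN N' → GN (Fm.impl N N')
  | allG {A : D → Fm D} : (∀ d, GN (A d)) → GN (Fm.allG A)
  | exG {A : D → Fm D} : (∀ d, GN (A d)) → GN (Fm.exG A)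

lemma GN_force_global {D : Type} (W : SFModel D) {N : Fm D} (hN : GN N) :
    ∀ k k', W.force k N → W.force k' N := by
  induction hN with
  | bot => intro k k' h; exact h.elim
  | neg A => intro k k' h; exact h
  | conj _ _ ih1 ih2 => intro k k' h; exact ⟨ih1 k k' h.1, ih2 k k' h.2⟩
  | disj _ _ ih1 ih2 =>
      intro k k' h
      rcases h with h | h
      · exact Or.inl (ih1 k k' h)
      · exact Or.inr (ih2 k k' h)
  | impl _ _ ih1 ih2 =>
      intro k k' h
      intro m hm hNm
      rcases h k (W.refl k) (ih1 m k hNm) with ⟨k'', _, hk''⟩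
      exact ⟨m, W.refl m, ih2 k'' m hk''⟩
  | allG _ ih =>
      intro k k' h d m hm
      rcases h d k (W.refl k) with ⟨k'', _, hk''⟩
      exact ⟨m, W.refl m, ih d k'' m hk''⟩
  | exG _ ih =>
      intro k k' h
      rcases h with ⟨d, hd⟩
      exact ⟨d, ih d k k' hd⟩

/-- For any closed global negative formula `N` and any strict
finitistic model `W`, if `N` is forced at some node of `W` then `N` is forced
at every node of `W`. -/
theorem GN_assertible_implies_valid {D : Type} [Nonempty D] (W : SFModel D)
    (N : Fm D) (hN : GN N) (h : W.assertible N) : W.valid N := by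
  rcases h with ⟨k, hk⟩
  intro k'
  exact GN_force_global W hN k k' hk
end

section
/- In every strict finitistic model, the double negation elimination for weak negation is valid: every node forces ((A→⊥)→⊥)→A for every closed formula A, where → is strict finitistic implication. -/
/-- In every strict finitistic model, double negation
elimination for weak negation is valid: every node forces `⌐⌐A → A`. -/
theorem wneg_dne_valid {D : Type} [Nonempty D] (W : SFModel D) (A : Fm D) :
    W.valid (Fm.impl (Fm.wneg (Fm.wneg A)) A) := by
  intro k k' _ h
  -- h : k' forces (A→⊥)→⊥
  have hk' := h k' (W.refl k')
  by_contra hc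
  push_neg at hc
  -- then k' forces A→⊥
  have : W.force k' (Fm.wneg A) := by
    intro l hl hA
    exact absurd hA (hc l hl)
  obtain ⟨m, _, hm⟩ := hk' this
  exact hm
end

section
/- Peirce's law is valid in strict finitistic semantics: every node of every strict finitistic model forces ((A→B)→A)→A for all closed formulas A, B. -/
/-- Peirce's law is valid in strict finitistic semantics:
every node of every strict finitistic model forces `((A→B)→A)→A`. -/
theorem peirce_valid {D : Type} [Nonempty D] (W : SFModel D) (A B : Fm D) :
    W.valid (Fm.impl (Fm.impl (Fm.impl A B) A) A) := by
  intro k k' _ h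
  by_cases hA : ∃ k'', W.le k' k'' ∧ W.force k'' A
  · exact hA
  · exact h k' (W.refl k') (fun l hl hAl => absurd ⟨l, hl, hAl⟩ hA)
end

section
/- In every strict finitistic model and for every closed formula A, the disjunction ¬A ∨ ¬¬A is valid (forced at every node), where ¬ is global negation. -/
/-- In every strict finitistic model and for every closed
formula `A`, the disjunction `¬A ∨ ¬¬A` is valid, where `¬` is global
negation (actual weak decidability). -/
theorem weak_decidability_valid {D : Type} [Nonempty D] (W : SFModel D) (A : Fm D) :
    W.valid (Fm.disj (Fm.neg A) (Fm.neg (Fm.neg A))) := by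
  intro k
  by_cases h : ∃ l, W.force l A
  · exact Or.inr (fun l hl => (hl h.choose) h.choose_spec)
  · exact Or.inl (fun l hl => h ⟨l, hl⟩)
end

section
/- The double-negation shift for weak negation holds in strict finitistic semantics: every node of every strict finitistic model forces ∀x ⌐⌐A → ⌐⌐∀x A, where ⌐A abbreviates A→⊥. -/
/-- The double-negation shift for weak negation holds in
strict finitistic semantics: every node of every strict finitistic model
forces `∀x ⌐⌐A → ⌐⌐∀x A` (with `⌐A := A → ⊥`). -/
theorem wneg_dns_valid {D : Type} [Nonempty D] (W : SFModel D) (A : D → Fm D) :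
    W.valid (Fm.impl (Fm.allL (fun d => Fm.wneg (Fm.wneg (A d))))
      (Fm.wneg (Fm.wneg (Fm.allL A)))) := by
  intro k k1 hk1 hAll
  refine ⟨k1, W.refl k1, ?_⟩
  intro k2 h12 hneg
  exfalso
  have hAllA : W.force k2 (Fm.allL A) := by
    intro d j h2j hEd
    obtain ⟨j', hjj', hdd⟩ := hAll d j (W.trans h12 h2j) hEd
    by_contra hno
    push_neg at hno
    obtain ⟨b, _, hb⟩ := hdd j' (W.refl j')
      (fun m hm hA => ((hno m (W.trans hjj' hm)) hA).elim)
    exact hb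
  obtain ⟨b, _, hb⟩ := hneg k2 (W.refl k2) hAllA
  exact hb
end

section
/- Modus Ponens fails for strict finitistic validity: there exist a strict finitistic model W and closed formulas A, B such that B→A and B are both valid in W but A is not valid in W. -/
/-- Modus Ponens fails for strict finitistic validity: there
exist a strict finitistic model `W` and closed formulas `A`, `B` such that
`B→A` and `B` are both valid in `W` but `A` is not valid in `W`. -/
theorem modus_ponens_fails :
    ∃ (D : Type) (W : SFModel D) (A B : Fm D),
      Nonempty D ∧ W.valid (Fm.impl B A) ∧ W.valid B ∧ ¬ W.valid A := by
  refine ⟨Unit, ⟨Bool, (· ≤ ·), le_refl, le_trans, le_antisymm, false,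
      fun k => Bool.false_le k, fun _ _ _ => False, fun _ k => k = true,
      fun _ h => h, fun h hk => le_antisymm (Bool.le_true _) (hk ▸ h)⟩,
    Fm.E (), Fm.impl (Fm.E ()) (Fm.E ()), ⟨()⟩, ?_, ?_, ?_⟩
  · intro k k' _ _
    exact ⟨true, Bool.le_true _, rfl⟩
  · intro k k' _ h
    exact ⟨k', le_refl _, h⟩
  · intro h
    exact Bool.false_ne_true (h false)
end

section
/- Weak Modus Ponens holds: in every strict finitistic model, if a node k forces both B→A and B, then k forces ⌐⌐A (i.e., (A→⊥)→⊥). -/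
theorem SFModel.force_mono {D : Type} (W : SFModel D) {k k' : W.K} (hle : W.le k k') :
    ∀ A : Fm D, W.force k A → W.force k' A := by
  intro A
  induction A generalizing k k' with
  | top => intro _; trivial
  | bot => intro h; exact h
  | atom P ds => exact W.atom_mono hle
  | E d => exact W.E_mono hle
  | conj A B ihA ihB => rintro ⟨ha, hb⟩; exact ⟨ihA hle ha, ihB hle hb⟩
  | disj A B ihA ihB =>
      rintro (ha | hb)
      · exact Or.inl (ihA hle ha)
      · exact Or.inr (ihB hle hb)
  | impl A B ihA ihB =>
      intro h m hm ha
      exact h m (W.trans hle hm) ha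
  | neg A ih => intro h; exact h
  | allG A ih =>
      intro h d m hm
      exact h d m (W.trans hle hm)
  | allL A ih =>
      intro h d m hm hE
      exact h d m (W.trans hle hm) hE
  | exG A ih =>
      rintro ⟨d, hd⟩
      exact ⟨d, ih d hle hd⟩
  | exL A ih =>
      rintro ⟨d, hE, hd⟩
      exact ⟨d, W.E_mono hle hE, ih d hle hd⟩

/-- Weak Modus Ponens: in every strict finitistic model, if a
node `k` forces both `B→A` and `B`, then `k` forces `⌐⌐A`. -/
theorem weak_modus_ponens {D : Type} [Nonempty D] (W : SFModel D) (A B : Fm D)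
    (k : W.K) (h1 : W.force k (Fm.impl B A)) (h2 : W.force k B) :
    W.force k (Fm.wneg (Fm.wneg A)) := by
  intro k' hle hna
  obtain ⟨k'', hk'', ha⟩ := h1 k' hle (W.force_mono hle B h2)
  obtain ⟨m, _, hf⟩ := hna k'' hk'' ha
  exact hf.elim
end

section
/- A strict finitistic model has the atomic prevalence property if and only if ¬¬P → P is valid in it for every closed atomic formula P. -/
lemma prevalent_iff_dne_valid {D : Type} (W : SFModel D) (A : Fm D) :
    (W.assertible A → W.prevalent A) ↔
      W.valid (Fm.impl (Fm.neg (Fm.neg A)) A) := by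
  constructor
  · intro h k k' _ hnn
    have hass : W.assertible A := by
      by_contra hc
      exact hnn k' (fun l hl => hc ⟨l, hl⟩)
    exact h hass k'
  · rintro h ⟨m, hm⟩ k
    exact h k k (W.refl k) (fun l hl => hl m hm)

/-- A strict finitistic model has the atomic prevalence
property if and only if `¬¬P → P` is valid in it for every closed atomic
formula `P` (including the existence atoms `E(d)`). -/
theorem atomicPrev_iff_atomic_dne {D : Type} [Nonempty D] (W : SFModel D) :
    W.atomicPrev ↔
      ((∀ (P : ℕ) (ds : List D),
          W.valid (Fm.impl (Fm.neg (Fm.neg (Fm.atom P ds))) (Fm.atom P ds))) ∧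
        (∀ d : D, W.valid (Fm.impl (Fm.neg (Fm.neg (Fm.E d))) (Fm.E d)))) := by
  unfold SFModel.atomicPrev
  rw [forall_congr' (fun P => forall_congr' (fun ds => prevalent_iff_dne_valid W (Fm.atom P ds))),
      forall_congr' (fun d => prevalent_iff_dne_valid W (Fm.E d))]
end

section
/- In a prevalent strict finitistic model, validity of an implication coincides with its assertibility: A→B is valid (forced at every node) if and only if A→B is forced at some node. -/
/-- In a prevalent strict finitistic model, validity of an
implication coincides with its assertibility: `A→B` is valid iff it is forced
at some node. -/
theorem impl_valid_iff_assertible {D : Type} [Nonempty D] (W : SFModel D)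
    (hW : W.prevModel) (A B : Fm D) :
    W.valid (Fm.impl A B) ↔ W.assertible (Fm.impl A B) := by
  constructor
  · intro h; exact ⟨W.root, h W.root⟩
  · rintro ⟨k0, hk0⟩ k k' _ hA
    have hAprev := hW.1 A ⟨k', hA⟩
    obtain ⟨k1, hk1, hAk1⟩ := hAprev k0
    obtain ⟨k2, hk2, hBk2⟩ := hk0 k1 hk1 hAk1
    exact hW.1 B ⟨k2, hBk2⟩ k'
end

section
/- In a prevalent strict finitistic model, global and weak negation are interchangeable preserving assertibility: for any formula context F and formula B with F[B] a closed formula, F[¬B] is assertible iff F[⌐B] is assertible, where ¬ is global negation and ⌐B abbreviates B→⊥. -/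
/-- Formula contexts: formulas with exactly one placeholder `hole`. -/
inductive Ctx (D : Type) : Type
  | hole
  | conjL (F : Ctx D) (A : Fm D)
  | conjR (A : Fm D) (F : Ctx D)
  | disjL (F : Ctx D) (A : Fm D)
  | disjR (A : Fm D) (F : Ctx D)
  | implL (F : Ctx D) (A : Fm D)
  | implR (A : Fm D) (F : Ctx D)
  | neg (F : Ctx D)
  | allG (F : D → Ctx D)
  | allL (F : D → Ctx D)
  | exG (F : D → Ctx D)
  | exL (F : D → Ctx D)

/-- `F.fill B` is the formula `F[B]`, obtained by filling the hole with `B`. -/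
def Ctx.fill {D : Type} : Ctx D → Fm D → Fm D
  | Ctx.hole, B => B
  | Ctx.conjL F A, B => Fm.conj (F.fill B) A
  | Ctx.conjR A F, B => Fm.conj A (F.fill B)
  | Ctx.disjL F A, B => Fm.disj (F.fill B) A
  | Ctx.disjR A F, B => Fm.disj A (F.fill B)
  | Ctx.implL F A, B => Fm.impl (F.fill B) A
  | Ctx.implR A F, B => Fm.impl A (F.fill B)
  | Ctx.neg F, B => Fm.neg (F.fill B)
  | Ctx.allG F, B => Fm.allG (fun d => (F d).fill B)
  | Ctx.allL F, B => Fm.allL (fun d => (F d).fill B)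
  | Ctx.exG F, B => Fm.exG (fun d => (F d).fill B)
  | Ctx.exL F, B => Fm.exL (fun d => (F d).fill B)

/-- Filling a context with pointwise forcing-equivalent formulas yields
pointwise forcing-equivalent formulas. -/
theorem fill_congr {D : Type} (W : SFModel D) {A A' : Fm D}
    (h : ∀ k, W.force k A ↔ W.force k A') :
    ∀ F : Ctx D, ∀ k, W.force k (F.fill A) ↔ W.force k (F.fill A') := by
  intro F
  induction F with
  | hole => exact h
  | conjL F C ih => intro k; simp only [Ctx.fill, SFModel.force, ih]
  | conjR C F ih => intro k; simp only [Ctx.fill, SFModel.force, ih]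
  | disjL F C ih => intro k; simp only [Ctx.fill, SFModel.force, ih]
  | disjR C F ih => intro k; simp only [Ctx.fill, SFModel.force, ih]
  | implL F C ih => intro k; simp only [Ctx.fill, SFModel.force, ih]
  | implR C F ih => intro k; simp only [Ctx.fill, SFModel.force, ih]
  | neg F ih => intro k; simp only [Ctx.fill, SFModel.force, ih]
  | allG F ih => intro k; simp only [Ctx.fill, SFModel.force, ih]
  | allL F ih => intro k; simp only [Ctx.fill, SFModel.force, ih]
  | exG F ih => intro k; simp only [Ctx.fill, SFModel.force, ih]
  | exL F ih => intro k; simp only [Ctx.fill, SFModel.force, ih]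

/-- In a prevalent model, `¬B` and `⌐B` are forced at exactly the same nodes. -/
theorem neg_wneg_force {D : Type} (W : SFModel D) (hW : W.prevModel) (B : Fm D) :
    ∀ k, W.force k (Fm.neg B) ↔ W.force k (Fm.wneg B) := by
  intro k
  by_cases hB : W.assertible B
  · have hp := hW.1 B hB
    constructor
    · intro hneg; obtain ⟨l, hl⟩ := hB; exact absurd hl (hneg l)
    · intro hw
      obtain ⟨k', hk', hBk'⟩ := hp k
      obtain ⟨k'', _, hfalse⟩ := hw k' hk' hBk'
      exact hfalse.elim
  · constructor
    · intro _ k' _ hB'; exact absurd ⟨k', hB'⟩ hB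
    · intro _ l hl; exact hB ⟨l, hl⟩

/-- In a prevalent strict finitistic model, global and weak
negation are interchangeable preserving assertibility: for any formula
context `F` and formula `B`, `F[¬B]` is assertible iff `F[⌐B]` is
assertible. -/
theorem neg_wneg_interchange_assertible {D : Type} [Nonempty D] (W : SFModel D)
    (hW : W.prevModel) (F : Ctx D) (B : Fm D) :
    W.assertible (F.fill (Fm.neg B)) ↔ W.assertible (F.fill (Fm.wneg B)) := by
  exact exists_congr (fill_congr W (neg_wneg_force W hW B) F)
end

section
/- For quantifier-free closed formulas, global and weak negation are fully interchangeable at every node of a prevalent model: k forces F[¬B] iff k forces F[⌐B]. -/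
/-- Quantifier-free formulas. -/
def Fm.qf {D : Type} : Fm D → Prop
  | Fm.top => True
  | Fm.bot => True
  | Fm.atom _ _ => True
  | Fm.E _ => True
  | Fm.conj A B => A.qf ∧ B.qf
  | Fm.disj A B => A.qf ∧ B.qf
  | Fm.impl A B => A.qf ∧ B.qf
  | Fm.neg A => A.qf
  | Fm.allG _ => False
  | Fm.allL _ => False
  | Fm.exG _ => False
  | Fm.exL _ => False

/-- Quantifier-free formula contexts. -/
def Ctx.qf {D : Type} : Ctx D → Prop
  | Ctx.hole => True
  | Ctx.conjL F A => F.qf ∧ A.qf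
  | Ctx.conjR A F => A.qf ∧ F.qf
  | Ctx.disjL F A => F.qf ∧ A.qf
  | Ctx.disjR A F => A.qf ∧ F.qf
  | Ctx.implL F A => F.qf ∧ A.qf
  | Ctx.implR A F => A.qf ∧ F.qf
  | Ctx.neg F => F.qf
  | Ctx.allG _ => False
  | Ctx.allL _ => False
  | Ctx.exG _ => False
  | Ctx.exL _ => False

theorem force_neg_iff_wneg {D : Type} (W : SFModel D) (hW : W.prevModel) (B : Fm D)
    (k : W.K) : W.force k (Fm.neg B) ↔ W.force k (Fm.wneg B) := by
  constructor
  · intro h k' _ hB'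
    exact absurd hB' (h k')
  · intro h l hl
    obtain ⟨k', hle, hk'⟩ := hW.1 B ⟨l, hl⟩ k
    obtain ⟨_, _, hfalse⟩ := h k' hle hk'
    exact hfalse

theorem force_fill_congr {D : Type} (W : SFModel D) (A A' : Fm D)
    (h : ∀ k, W.force k A ↔ W.force k A') :
    ∀ (F : Ctx D) (k : W.K), W.force k (F.fill A) ↔ W.force k (F.fill A')
  | Ctx.hole, k => h k
  | Ctx.conjL F C, k => and_congr (force_fill_congr W A A' h F k) Iff.rfl
  | Ctx.conjR C F, k => and_congr Iff.rfl (force_fill_congr W A A' h F k)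
  | Ctx.disjL F C, k => or_congr (force_fill_congr W A A' h F k) Iff.rfl
  | Ctx.disjR C F, k => or_congr Iff.rfl (force_fill_congr W A A' h F k)
  | Ctx.implL F C, k => by
    show (∀ k', _ → _ → _) ↔ _
    exact forall_congr' fun k' => imp_congr Iff.rfl
      (imp_congr (force_fill_congr W A A' h F k') Iff.rfl)
  | Ctx.implR C F, k => by
    show (∀ k', _ → _ → _) ↔ _
    exact forall_congr' fun k' => imp_congr Iff.rfl (imp_congr Iff.rfl
      (exists_congr fun k'' => and_congr Iff.rfl (force_fill_congr W A A' h F k'')))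
  | Ctx.neg F, k => by
    show (∀ l, ¬ _) ↔ _
    exact forall_congr' fun l => not_congr (force_fill_congr W A A' h F l)
  | Ctx.allG F, k => by
    show (∀ d k', _ → ∃ k'', _) ↔ _
    exact forall_congr' fun d => forall_congr' fun k' => imp_congr Iff.rfl
      (exists_congr fun k'' => and_congr Iff.rfl (force_fill_congr W A A' h (F d) k''))
  | Ctx.allL F, k => by
    show (∀ d k', _ → _ → ∃ k'', _) ↔ _
    exact forall_congr' fun d => forall_congr' fun k' => imp_congr Iff.rfl (imp_congr Iff.rfl
      (exists_congr fun k'' => and_congr Iff.rfl (force_fill_congr W A A' h (F d) k'')))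
  | Ctx.exG F, k => exists_congr fun d => force_fill_congr W A A' h (F d) k
  | Ctx.exL F, k => exists_congr fun d =>
      and_congr Iff.rfl (force_fill_congr W A A' h (F d) k)

/-- For quantifier-free closed formulas, global and weak
negation are fully interchangeable at every node of a prevalent model:
`k` forces `F[¬B]` iff `k` forces `F[⌐B]`. -/
theorem neg_wneg_interchange_qf {D : Type} [Nonempty D] (W : SFModel D)
    (hW : W.prevModel) (F : Ctx D) (B : Fm D) (hF : F.qf) (hB : B.qf) :
    ∀ k : W.K, W.force k (F.fill (Fm.neg B)) ↔ W.force k (F.fill (Fm.wneg B)) :=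
  force_fill_congr W _ _ (force_neg_iff_wneg W hW B) F
end
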